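/- Let h be a transcendental real number and for a rational number a define δ(a) = (a²−a) + (a⁴−a³+2a−1)/((a³−3a+1)h² + a²+a+1). Then the denominator (a³−3a+1)h²+a²+a+1 is nonzero for all rational a, and δ(a) ≠ 0 for all rational a with a(a+1) ≠ 0. -/

import Mathlib

open Polynomial

theorem Transcendental.algebraMap_mul_sq_add_ne_zero {R A : Type*} [CommRing R] [Ring A]
    [Algebra R A] {x : A} (hx : Transcendental R x) {q : R} (hq : q ≠ 0) (r : R) :
    algebraMap R A q * x ^ 2 + algebraMap R A r ≠ 0 := by
  refine fun h ↦ hx ⟨C q * X ^ 2 + C r, fun hp ↦ hq ?_, by simpa [Algebra.smul_def] using h⟩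
  simpa using congrArg (coeff · 2) hp

theorem Int.cube_sub_three_mul_add_one_ne_zero (n : ℤ) : n ^ 3 - 3 * n + 1 ≠ 0 := by
  intro h
  have h2 := congrArg (Int.cast : ℤ → ZMod 2) h
  push_cast at h2
  revert h2
  generalize (n : ZMod 2) = x
  revert x
  decide

-- A rational root is integral over `ℤ`, hence an integer, and no integer is a root by parity.
theorem Rat.cube_sub_three_mul_add_one_ne_zero (a : ℚ) : a ^ 3 - 3 * a + 1 ≠ 0 := by
  intro h
  have hint : IsIntegral ℤ a :=
    ⟨X ^ 3 - C 3 * X + 1, by monicity!, by simp [h]⟩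
  obtain ⟨n, rfl⟩ := IsIntegrallyClosed.isIntegral_iff.mp hint
  exact Int.cube_sub_three_mul_add_one_ne_zero n (by simp only [eq_intCast] at h; exact_mod_cast h)

/-- For `h` transcendental, the denominator `(a³−3a+1)h²+a²+a+1` is nonzero for all
rational `a`, and `δ(a) = (a²−a) + (a⁴−a³+2a−1)/((a³−3a+1)h²+a²+a+1)` is nonzero
whenever `a(a+1) ≠ 0`. -/
theorem stmt_1 (h : ℝ) (hh : Transcendental ℚ h) :
    (∀ a : ℚ, ((a : ℝ)^3 - 3*a + 1) * h^2 + (a : ℝ)^2 + a + 1 ≠ 0) ∧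
    (∀ a : ℚ, a * (a + 1) ≠ 0 →
      ((a : ℝ)^2 - a) +
        ((a : ℝ)^4 - (a : ℝ)^3 + 2*a - 1) /
          (((a : ℝ)^3 - 3*a + 1) * h^2 + (a : ℝ)^2 + a + 1) ≠ 0) := by
  have hquad (q r : ℚ) (hq : q ≠ 0) : (q : ℝ) * h ^ 2 + r ≠ 0 := by
    simpa using hh.algebraMap_mul_sq_add_ne_zero hq r
  have hden (a : ℚ) : ((a : ℝ)^3 - 3*a + 1) * h^2 + (a : ℝ)^2 + a + 1 ≠ 0 := by
    convert hquad _ (a ^ 2 + a + 1) (Rat.cube_sub_three_mul_add_one_ne_zero a) using 1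
    push_cast
    ring
  refine ⟨hden, fun a ha ↦ ?_⟩
  rw [add_div' _ _ _ (hden a), div_ne_zero_iff]
  refine ⟨?_, hden a⟩
  rcases eq_or_ne a 1 with rfl | ha1
  · norm_num
  -- Clearing the denominator leaves a quadratic in `h` whose leading coefficient is
  -- `(a² - a)(a³ - 3a + 1)`.
  have hlead : (a * (a - 1)) * (a ^ 3 - 3 * a + 1) ≠ 0 :=
    mul_ne_zero (mul_ne_zero (left_ne_zero_of_mul ha) (sub_ne_zero.mpr ha1))
      (Rat.cube_sub_three_mul_add_one_ne_zero a)
  convert hquad _ (2 * a ^ 4 - a ^ 3 + a - 1) hlead using 1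
  push_cast
  ring
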